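/- arXiv:1606.04588 — 3 statements merged into one kernel-verified Lean document; each statement's English description precedes it below -/
import Mathlib

section
/- The dual Bernstein polynomials of degree N sum to the constant N+1: Σ_{j=0}^N ψ̃_j(x) = N+1 for all x. -/
open Finset

/-- The `i`-th Bernstein basis polynomial of degree `N` on `[0,1]`. -/
noncomputable def bernstein' (N i : ℕ) : ℝ → ℝ :=
  fun x => (N.choose i : ℝ) * x ^ i * (1 - x) ^ (N - i)

/-- The coefficients of the dual Bernstein polynomials in the Bernstein basis. -/
noncomputable def dualCoeff (N i j : ℕ) : ℝ :=
  ((-1 : ℝ) ^ (i + j) / ((N.choose i : ℝ) * (N.choose j : ℝ))) *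
    ∑ r ∈ range (min i j + 1),
      (2 * (r : ℝ) + 1) * ((N + r + 1).choose (N - i) : ℝ) * ((N - r).choose (N - i) : ℝ) *
        ((N + r + 1).choose (N - j) : ℝ) * ((N - r).choose (N - j) : ℝ)

/-- The `i`-th dual Bernstein polynomial of degree `N`. -/
noncomputable def dualBernstein (N i : ℕ) : ℝ → ℝ :=
  fun x => ∑ j ∈ range (N + 1), dualCoeff N i j * bernstein' N j x

/-!
The Bernstein basis is a partition of unity, so it suffices that every column of the coefficient
matrix `dualCoeff N` sums to `N + 1`. Summing over the row index first, the inner sum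
`∑ i, (-1)^i C(N+r+1, N-i) C(N-r, N-i) / C(N, i)` equals `(-1)^r`: after the trinomial revision
`C(N-r, N-i) / C(N, i) = C(i, r) / C(N, r)` it is the Chu–Vandermonde convolution of `N + r + 1`
with `-(r + 1)`. What is left is the alternating sum
`∑ r, (2r+1) (-1)^r C(N+r+1, m) C(N-r, m) = (-1)^(N-m) (N+1) C(N, m)`, which follows by induction
on `N` from a Wilf–Zeilberger telescoping relation.
-/

theorem choose_mul_choose_eq_choose_mul_choose_sub {N i : ℕ} (r : ℕ) (hi : i ≤ N) :
    N.choose i * i.choose r = N.choose r * (N - r).choose (N - i) := by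
  rcases le_or_gt r i with hri | hir
  · rw [Nat.choose_mul hri, ← Nat.choose_symm (Nat.sub_le_sub_right hi r)]
    congr 2
    omega
  · rw [Nat.choose_eq_zero_of_lt hir, mul_zero]
    rcases le_or_gt r N with hrN | hNr
    · rw [Nat.choose_eq_zero_of_lt (by omega : N - r < N - i), mul_zero]
    · rw [Nat.choose_eq_zero_of_lt hNr, zero_mul]

theorem sum_neg_one_pow_mul_choose_sub_mul_add_choose (a r n : ℕ) :
    ∑ j ∈ range (n + 1), (-1 : ℤ) ^ j * (a + r + 1).choose (n - j) * (r + j).choose r =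
      a.choose n := by
  have hvandermonde := Ring.add_choose_eq (R := ℤ) (r := ((a + r + 1 : ℕ) : ℤ))
    (s := -((r + 1 : ℕ) : ℤ)) n (Commute.all _ _)
  rw [show ((a + r + 1 : ℕ) : ℤ) + -((r + 1 : ℕ) : ℤ) = a by push_cast; ring,
    Ring.choose_natCast, ← Nat.sum_antidiagonal_swap] at hvandermonde
  simp only [Prod.fst_swap, Prod.snd_swap] at hvandermonde
  rw [hvandermonde, Nat.sum_antidiagonal_eq_sum_range_succ
    (fun j k => Ring.choose ((a + r + 1 : ℕ) : ℤ) k * Ring.choose (-((r + 1 : ℕ) : ℤ)) j)]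
  refine sum_congr rfl fun j _ => ?_
  rw [Ring.choose_neg, Ring.choose_natCast,
    show ((r + 1 : ℕ) : ℤ) + j - 1 = ((r + j : ℕ) : ℤ) by push_cast; ring,
    Ring.choose_natCast, Units.smul_def, Int.negOnePow_def, Nat.choose_symm_add]
  simp only [smul_eq_mul, zpow_natCast, Units.val_pow_eq_pow_val, Units.val_neg, Units.val_one]
  ring

theorem sum_neg_one_pow_mul_choose_sub_mul_choose {N r : ℕ} (hr : r ≤ N) :
    ∑ i ∈ range (N + 1), (-1 : ℤ) ^ i * (N + r + 1).choose (N - i) * i.choose r =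
      (-1) ^ r * N.choose r := by
  have hsplit : N + 1 = r + (N - r + 1) := by omega
  rw [hsplit, sum_range_add, sum_eq_zero fun i hi => by
      rw [Nat.choose_eq_zero_of_lt (mem_range.mp hi), Nat.cast_zero, mul_zero], zero_add,
    ← Nat.choose_symm hr, ← sum_neg_one_pow_mul_choose_sub_mul_add_choose N r (N - r), mul_sum]
  refine sum_congr rfl fun j _ => ?_
  rw [show N - (r + j) = N - r - j by omega, pow_add]
  ring

theorem sum_neg_one_pow_mul_choose_mul_choose_div_choose {N r : ℕ} (hr : r ≤ N) :
    ∑ i ∈ range (N + 1), (-1 : ℝ) ^ i * (N + r + 1).choose (N - i) * (N - r).choose (N - i) /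
      N.choose i = (-1) ^ r := by
  have hNr : (N.choose r : ℝ) ≠ 0 := by exact_mod_cast (Nat.choose_pos hr).ne'
  have hterm : ∀ i ∈ range (N + 1),
      (-1 : ℝ) ^ i * (N + r + 1).choose (N - i) * (N - r).choose (N - i) / N.choose i =
        (-1 : ℝ) ^ i * (N + r + 1).choose (N - i) * i.choose r / N.choose r := by
    intro i hi
    have hi := mem_range_succ_iff.mp hi
    have hNi : (N.choose i : ℝ) ≠ 0 := by exact_mod_cast (Nat.choose_pos hi).ne'
    have hchoose : (N.choose i : ℝ) * i.choose r = N.choose r * (N - r).choose (N - i) := by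
      exact_mod_cast choose_mul_choose_eq_choose_mul_choose_sub r hi
    rw [div_eq_div_iff hNi hNr]
    linear_combination (-(-1 : ℝ) ^ i * (N + r + 1).choose (N - i)) * hchoose
  have hint := congrArg (Int.cast (R := ℝ)) (sum_neg_one_pow_mul_choose_sub_mul_choose hr)
  push_cast at hint
  rw [sum_congr rfl hterm, ← sum_div, hint, mul_div_assoc, div_self hNr, mul_one]

theorem sub_mul_choose_succ (n m : ℕ) :
    ((n : ℤ) + 1 - m) * (n + 1).choose m = (n + 1) * n.choose m := by
  rcases le_or_gt m (n + 1) with hm | hm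
  · have h := congrArg (Nat.cast (R := ℤ)) (Nat.choose_mul_succ_eq n m)
    push_cast [Nat.cast_sub hm] at h
    linarith
  · rw [Nat.choose_eq_zero_of_lt hm, Nat.choose_eq_zero_of_lt (by omega)]
    simp

def wzSummand (N m r : ℕ) : ℤ :=
  (2 * r + 1) * (-1) ^ r * (N + r + 1).choose m * (N - r).choose m

def wzCertificate (N m r : ℕ) : ℤ :=
  (2 * N + 3 - m) * r * (-1) ^ (r + 1) * (N + r + 1).choose m * (N + 1 - r).choose m

theorem wzSummand_succ_telescope (N m : ℕ) {r : ℕ} (hr : r ≤ N) :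
    ((N : ℤ) + 1 - m) * wzSummand (N + 1) m r + (N + 2) * wzSummand N m r =
      wzCertificate N m (r + 1) - wzCertificate N m r := by
  have rel₁ := sub_mul_choose_succ (N + r + 1) m
  have rel₂ := sub_mul_choose_succ (N - r) m
  rw [wzSummand, wzSummand, wzCertificate, wzCertificate,
    show N + 1 + r + 1 = N + r + 1 + 1 by omega, show N + (r + 1) + 1 = N + r + 1 + 1 by omega,
    show N + 1 - (r + 1) = N - r by omega, show N + 1 - r = N - r + 1 by omega]
  push_cast [Nat.cast_sub hr] at rel₁ rel₂ ⊢
  generalize ((N + r + 1 + 1).choose m : ℤ) = U at *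
  generalize ((N - r + 1).choose m : ℤ) = V at *
  generalize ((N + r + 1).choose m : ℤ) = X at *
  generalize ((N - r).choose m : ℤ) = Y at *
  have hab : ((N : ℤ) + r + 1 + 1) * (N - r + 1) ≠ 0 := by
    have : (r : ℤ) ≤ N := by exact_mod_cast hr
    positivity
  set a : ℤ := N + r + 1 + 1
  set b : ℤ := N - r + 1
  set s : ℤ := (-1) ^ r
  -- `rel₁` and `rel₂` express `X` and `Y` through `U` and `V`; once the denominators `a b` are
  -- cleared, what remains is a polynomial identity in `N`, `r`, `m`.
  apply mul_left_cancel₀ hab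
  linear_combination ((2 * N + 3 - m) * r * s * b * V - (N + 2) * (2 * r + 1) * s * b * Y) * rel₁
    - ((N + 2) * (2 * r + 1) * s * (a - m) * U - (2 * N + 3 - m) * (r + 1) * s * a * U) * rel₂

theorem wzSummand_last_add_wzCertificate (N m : ℕ) :
    ((N : ℤ) + 1 - m) * wzSummand (N + 1) m (N + 1) + wzCertificate N m (N + 1) = 0 := by
  rcases Nat.eq_zero_or_pos m with rfl | hm
  · simp only [wzSummand, wzCertificate, Nat.choose_zero_right]
    push_cast
    ring
  · simp [wzSummand, wzCertificate, Nat.choose_eq_zero_of_lt hm]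

theorem sum_wzSummand {N m : ℕ} (hm : m ≤ N) :
    ∑ r ∈ range (N + 1), wzSummand N m r = (-1) ^ (N - m) * (N + 1) * N.choose m := by
  induction N, hm using Nat.le_induction with
  | base =>
    rw [sum_range_succ', sum_eq_zero fun r hr => by
      rw [wzSummand, Nat.choose_eq_zero_of_lt (by simp at hr; omega : m - (r + 1) < m)]; simp]
    simp [wzSummand, Nat.choose_succ_self_right]
  | succ N hmN ih =>
    have htel : ∑ r ∈ range (N + 1),
        (((N : ℤ) + 1 - m) * wzSummand (N + 1) m r + (N + 2) * wzSummand N m r) =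
          wzCertificate N m (N + 1) := by
      rw [sum_congr rfl fun r hr => wzSummand_succ_telescope N m (mem_range_succ_iff.mp hr),
        sum_range_sub]
      simp [wzCertificate]
    rw [sum_add_distrib, ← mul_sum, ← mul_sum, ih] at htel
    have hne : (N : ℤ) + 1 - m ≠ 0 := by
      have : (m : ℤ) ≤ N := by exact_mod_cast hmN
      linarith
    apply mul_left_cancel₀ hne
    rw [sum_range_succ, show N + 1 - m = N - m + 1 by omega, pow_succ]
    push_cast
    linear_combination htel + wzSummand_last_add_wzCertificate N m +
      (-1) ^ (N - m) * (N + 2) * sub_mul_choose_succ N m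

theorem dualCoeff_eq_sum_range {N i : ℕ} (j : ℕ) (hi : i ≤ N) :
    dualCoeff N i j = ((-1 : ℝ) ^ (i + j) / ((N.choose i : ℝ) * (N.choose j : ℝ))) *
      ∑ r ∈ range (N + 1),
        (2 * (r : ℝ) + 1) * ((N + r + 1).choose (N - i) : ℝ) * ((N - r).choose (N - i) : ℝ) *
          ((N + r + 1).choose (N - j) : ℝ) * ((N - r).choose (N - j) : ℝ) := by
  rw [dualCoeff]
  congr 1
  refine sum_subset (range_subset_range.mpr (by omega)) fun r hr hr' => ?_
  rw [mem_range] at hr hr'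
  rcases lt_or_ge i r with hir | hri
  · rw [Nat.choose_eq_zero_of_lt (by omega : N - r < N - i)]
    simp
  · rw [Nat.choose_eq_zero_of_lt (by omega : N - r < N - j)]
    simp

theorem sum_dualCoeff {N j : ℕ} (hj : j ≤ N) :
    ∑ i ∈ range (N + 1), dualCoeff N i j = (N : ℝ) + 1 := by
  have hNj : (N.choose j : ℝ) ≠ 0 := by exact_mod_cast (Nat.choose_pos hj).ne'
  have hwz := congrArg (Int.cast (R := ℝ)) (sum_wzSummand (Nat.sub_le N j))
  simp only [wzSummand, Nat.sub_sub_self hj, Nat.choose_symm hj] at hwz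
  push_cast at hwz
  calc ∑ i ∈ range (N + 1), dualCoeff N i j
      = ∑ r ∈ range (N + 1), (-1 : ℝ) ^ j / N.choose j *
          ((2 * (r : ℝ) + 1) * (N + r + 1).choose (N - j) * (N - r).choose (N - j)) *
          ∑ i ∈ range (N + 1),
            (-1 : ℝ) ^ i * (N + r + 1).choose (N - i) * (N - r).choose (N - i) / N.choose i := by
        rw [sum_congr rfl fun i hi => dualCoeff_eq_sum_range j (mem_range_succ_iff.mp hi)]
        simp only [mul_sum]
        rw [sum_comm]
        refine sum_congr rfl fun r _ => sum_congr rfl fun i _ => ?_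
        rw [pow_add]
        ring
    _ = (-1 : ℝ) ^ j / N.choose j * ∑ r ∈ range (N + 1),
          (2 * (r : ℝ) + 1) * (-1) ^ r * (N + r + 1).choose (N - j) * (N - r).choose (N - j) := by
        rw [mul_sum]
        refine sum_congr rfl fun r hr => ?_
        rw [sum_neg_one_pow_mul_choose_mul_choose_div_choose (mem_range_succ_iff.mp hr)]
        ring
    _ = (N : ℝ) + 1 := by
        rw [hwz]
        field_simp
        rw [← pow_mul, mul_comm, pow_mul, neg_one_sq, one_pow]

theorem sum_bernstein' (N : ℕ) (x : ℝ) : ∑ j ∈ range (N + 1), bernstein' N j x = 1 := by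
  simpa [bernstein', bernsteinPolynomial, Polynomial.eval_finsetSum] using
    congrArg (Polynomial.eval x) (bernsteinPolynomial.sum ℝ N)

theorem dualBernstein_sum (N : ℕ) (x : ℝ) :
    ∑ j ∈ range (N + 1), dualBernstein N j x = (N : ℝ) + 1 := by
  calc ∑ j ∈ range (N + 1), dualBernstein N j x
      = ∑ k ∈ range (N + 1), (∑ j ∈ range (N + 1), dualCoeff N j k) * bernstein' N k x := by
        simp only [dualBernstein, sum_mul]
        exact sum_comm
    _ = ∑ k ∈ range (N + 1), ((N : ℝ) + 1) * bernstein' N k x :=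
        sum_congr rfl fun k hk => by rw [sum_dualCoeff (mem_range_succ_iff.mp hk)]
    _ = (N : ℝ) + 1 := by rw [← mul_sum, sum_bernstein', mul_one]
end

section
/- For the dual Bernstein polynomials of degree N and any p ≤ N, the p-th derivative at 0 is given by ψ̃_i^{(p)}(0) = (-1)^p N!/(N-p)! · Σ_{r=0}^p (-1)^r c_{i,r} C(p,r), where c_{i,r} are the dual basis coefficients. -/
/-! Writing `B_{N,j}` for Mathlib's `bernsteinPolynomial`, the rule
`B_{N,j}' = N (B_{N-1,j-1} - B_{N-1,j})` gives by induction
`B_{N,j}^{(p)}(0) = (-1)^(p+j) N!/(N-p)! C(p,j)`; the theorem follows by linearity. -/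

open Finset

open Polynomial

theorem Polynomial.iteratedDeriv_eval {𝕜 : Type*} [NontriviallyNormedField 𝕜] (P : 𝕜[X])
    (k : ℕ) :
    iteratedDeriv k (fun x => P.eval x) = fun x => (derivative^[k] P).eval x := by
  induction k with
  | zero => simp
  | succ k ih =>
    rw [iteratedDeriv_succ, ih, Function.iterate_succ_apply']
    ext x
    exact Polynomial.deriv _

namespace bernsteinPolynomial

variable {R : Type*} [CommRing R]

theorem iterate_derivative_eval_zero (N j p : ℕ) :
    (derivative^[p] (bernsteinPolynomial R N j)).eval 0 =
      (-1) ^ (p + j) * N.descFactorial p * p.choose j := by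
  induction p generalizing N j with
  | zero => cases j <;> simp [eval_at_0]
  | succ p ih =>
    have hfac : (N : R) * (N - 1).descFactorial p = N.descFactorial (p + 1) := by
      cases N with
      | zero => simp
      | succ n => rw [Nat.add_sub_cancel, Nat.succ_descFactorial_succ, Nat.cast_mul]
    cases j with
    | zero =>
      rw [Function.iterate_succ_apply, derivative_zero, neg_mul, iterate_derivative_neg,
        iterate_derivative_natCast_mul, eval_neg, eval_mul, eval_natCast, ih, ← hfac]
      simp only [Nat.choose_zero_right]
      ring
    | succ j =>
      rw [Function.iterate_succ_apply, derivative_succ, iterate_derivative_natCast_mul,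
        iterate_derivative_sub, eval_mul, eval_natCast, eval_sub, ih, ih, ← hfac,
        Nat.choose_succ_succ', Nat.cast_add]
      ring

end bernsteinPolynomial

theorem iteratedDeriv_sum_bernstein'_at_zero (c : ℕ → ℝ) {N p : ℕ} (hp : p ≤ N) :
    iteratedDeriv p (fun x => ∑ j ∈ range (N + 1), c j * bernstein' N j x) 0 =
      (-1) ^ p * N.descFactorial p * ∑ r ∈ range (p + 1), (-1) ^ r * c r * p.choose r := by
  have hpoly : (fun x => ∑ j ∈ range (N + 1), c j * bernstein' N j x) =
      fun x => (∑ j ∈ range (N + 1), C (c j) * bernsteinPolynomial ℝ N j).eval x := by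
    ext x
    simp [bernstein', bernsteinPolynomial, eval_finsetSum, mul_assoc]
  rw [hpoly, iteratedDeriv_eval, mul_sum]
  simp only [iterate_derivative_sum, eval_finsetSum, iterate_derivative_C_mul, eval_mul, eval_C,
    bernsteinPolynomial.iterate_derivative_eval_zero]
  refine (sum_subset (range_subset_range.2 (by omega)) fun j _ hj => ?_).symm.trans
    (sum_congr rfl fun j _ => by ring)
  rw [Nat.choose_eq_zero_of_lt (by simpa using hj), Nat.cast_zero, mul_zero, mul_zero]

theorem dualBernstein_iteratedDeriv_at_zero_general (N i p : ℕ) (hp : p ≤ N) :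
    iteratedDeriv p (dualBernstein N i) 0 =
      (-1 : ℝ) ^ p * (N.factorial : ℝ) / ((N - p).factorial : ℝ) *
        ∑ r ∈ range (p + 1), (-1 : ℝ) ^ r * dualCoeff N i r * (p.choose r : ℝ) := by
  unfold dualBernstein
  rw [iteratedDeriv_sum_bernstein'_at_zero _ hp, ← Nat.factorial_mul_descFactorial hp]
  have : ((N - p).factorial : ℝ) ≠ 0 := by positivity
  push_cast
  field_simp

theorem dualBernstein_iteratedDeriv_at_zero (N i p : ℕ) (hi : i ≤ N) (hp : p ≤ N) :
    iteratedDeriv p (dualBernstein N i) 0 =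
      (-1 : ℝ) ^ p * (N.factorial : ℝ) / ((N - p).factorial : ℝ) *
        ∑ r ∈ range (p + 1), (-1 : ℝ) ^ r * dualCoeff N i r * (p.choose r : ℝ) :=
  dualBernstein_iteratedDeriv_at_zero_general N i p hp
end

section
/- Let n ≤ N. The Bernstein polynomials {φ_i : ⌊n/2⌋ ≤ i ≤ N - ⌊(n+1)/2⌋} form a basis for the space V_N^{0,n} of polynomials of degree ≤ N satisfying the homogeneous boundary conditions: v^{(p)}(0) = v^{(p)}(1) = 0 for 0 ≤ p ≤ (n-2)/2 when n is even; v^{(p)}(0) = v^{(p)}(1) = 0 for 0 ≤ p ≤ (n-3)/2 together with v^{((n-1)/2)}(1) = 0 when n is odd. -/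
/-!
Pairing `∑ cᵢ φᵢ` with the functionals `q ↦ q⁽ᵖ⁾(0)` is triangular: `φᵢ⁽ᵖ⁾(0) = 0` for `p < i`
while `φᵢ⁽ⁱ⁾(0) ≠ 0`; symmetrically at `1`, with `N - i` in place of `i`. Hence the conditions
of order `< ⌊n/2⌋` at `0` and `< ⌊(n+1)/2⌋` at `1` kill exactly the coefficients with
`i < ⌊n/2⌋` or `N - i < ⌊(n+1)/2⌋`. The same triangularity makes `φ₀, …, φ_N` independent,
so by a dimension count they are a basis of the polynomials of degree `≤ N`, and the trial
space is spanned by the remaining `φᵢ`.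
-/

open Polynomial

/-- The `i`-th Bernstein basis polynomial of degree `N`, as a polynomial. -/
noncomputable def bernsteinP (N i : ℕ) : Polynomial ℝ :=
  (N.choose i : ℝ) • (X ^ i * (1 - X) ^ (N - i))

/-- The homogeneous boundary conditions defining the trial space `V_N^{0,n}`:
for `n` even, `v⁽ᵖ⁾(0) = v⁽ᵖ⁾(1) = 0` for `0 ≤ p ≤ (n-2)/2`; for `n` odd, the same
for `0 ≤ p ≤ (n-3)/2` together with `v^((n-1)/2)(1) = 0`. -/
def trialBC (n : ℕ) (q : Polynomial ℝ) : Prop :=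
  if Even n then
    ∀ p, 2 * p + 2 ≤ n →
      ((fun r => derivative r)^[p] q).eval 0 = 0 ∧ ((fun r => derivative r)^[p] q).eval 1 = 0
  else
    (∀ p, 2 * p + 3 ≤ n →
      ((fun r => derivative r)^[p] q).eval 0 = 0 ∧ ((fun r => derivative r)^[p] q).eval 1 = 0) ∧
      ((fun r => derivative r)^[(n - 1) / 2] q).eval 1 = 0

section Triangular

variable {ι R M : Type*} [CommRing R] [NoZeroDivisors R] [AddCommGroup M] [Module R M]

theorem eq_zero_of_triangular (L : ℕ → M →ₗ[R] R) (v : ι → M) (o : ι → ℕ) {s : Finset ι}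
    (ho : Set.InjOn o s) (hlt : ∀ p, ∀ i ∈ s, p < o i → L p (v i) = 0)
    (hdiag : ∀ i ∈ s, L (o i) (v i) ≠ 0) (c : ι → R) {m : ℕ}
    (h : ∀ p < m, L p (∑ i ∈ s, c i • v i) = 0) : ∀ i ∈ s, o i < m → c i = 0 := by
  suffices ∀ k, ∀ i ∈ s, o i = k → k < m → c i = 0 from fun i hi => this _ i hi rfl
  intro k
  induction k using Nat.strong_induction_on with
  | _ k ih =>
    rintro i hi rfl hk
    have hLi := h (o i) hk
    rw [map_sum, Finset.sum_eq_single_of_mem i hi] at hLi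
    · rw [map_smul, smul_eq_mul] at hLi
      exact (mul_eq_zero.1 hLi).resolve_right (hdiag i hi)
    · intro j hj hji
      rw [map_smul, smul_eq_mul]
      rcases lt_trichotomy (o j) (o i) with hji' | hji' | hji'
      · rw [ih _ hji' j hj rfl (hji'.trans hk), zero_mul]
      · exact absurd (ho hj hi hji') hji
      · rw [hlt _ j hj hji', mul_zero]

theorem linearIndependent_of_triangular (L : ℕ → M →ₗ[R] R) (v : ι → M) (o : ι → ℕ)
    (ho : Function.Injective o) (hlt : ∀ p i, p < o i → L p (v i) = 0)
    (hdiag : ∀ i, L (o i) (v i) ≠ 0) : LinearIndependent R v :=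
  linearIndependent_iff'.2 fun s c hc i hi =>
    eq_zero_of_triangular L v o ho.injOn (fun p i _ => hlt p i) (fun i _ => hdiag i) c
      (m := o i + 1) (fun p _ => by rw [hc, map_zero]) i hi (Nat.lt_succ_self _)

end Triangular

section IterateDerivativeEval

variable {R : Type*} [CommRing R]

noncomputable def iterateDerivativeEval (x : R) (p : ℕ) : R[X] →ₗ[R] R :=
  leval x ∘ₗ derivative ^ p

@[simp]
theorem iterateDerivativeEval_apply (x : R) (p : ℕ) (q : R[X]) :
    iterateDerivativeEval x p q = (derivative^[p] q).eval x := by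
  simp [iterateDerivativeEval, Module.End.pow_apply]

noncomputable def boundaryVanishing (R : Type*) [CommRing R] (N a b : ℕ) : Submodule R R[X] :=
  degreeLE R N ⊓ (⨅ p < a, LinearMap.ker (iterateDerivativeEval 0 p)) ⊓
    ⨅ p < b, LinearMap.ker (iterateDerivativeEval 1 p)

theorem mem_boundaryVanishing {N a b : ℕ} {q : R[X]} :
    q ∈ boundaryVanishing R N a b ↔ q.degree ≤ N ∧
      (∀ p < a, (derivative^[p] q).eval 0 = 0) ∧ ∀ p < b, (derivative^[p] q).eval 1 = 0 := by
  simp [boundaryVanishing, Submodule.mem_iInf, mem_degreeLE, and_assoc]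

theorem bernsteinPolynomial.degree_le (N ν : ℕ) : (bernsteinPolynomial R N ν).degree ≤ N := by
  rcases lt_or_ge N ν with h | h
  · simp [bernsteinPolynomial.eq_zero_of_lt R h]
  · refine degree_le_of_natDegree_le ?_
    unfold bernsteinPolynomial
    compute_degree
    omega

variable [NoZeroDivisors R] [CharZero R]

theorem bernsteinPolynomial.linearIndependent_comp {ι : Type*} (N : ℕ) (o : ι → ℕ)
    (ho : Function.Injective o) (hN : ∀ i, o i ≤ N) :
    LinearIndependent R fun i => bernsteinPolynomial R N (o i) :=
  linearIndependent_of_triangular (iterateDerivativeEval (0 : R)) _ o ho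
    (fun _ _ h => by simpa using bernsteinPolynomial.iterate_derivative_at_0_eq_zero_of_lt R N h)
    (fun i => by simpa using bernsteinPolynomial.iterate_derivative_at_0_ne_zero R N _ (hN i))

theorem bernsteinPolynomial.coeff_eq_zero_of_iterate_derivative_at_0 {N a : ℕ}
    (c : Fin (N + 1) → R)
    (h : ∀ p < a, (derivative^[p] (∑ i, c i • bernsteinPolynomial R N i)).eval 0 = 0) :
    ∀ i : Fin (N + 1), (i : ℕ) < a → c i = 0 := fun i =>
  eq_zero_of_triangular (iterateDerivativeEval 0) _ (fun i : Fin (N + 1) => (i : ℕ))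
    Fin.val_injective.injOn
    (fun _ _ _ h => by simpa using bernsteinPolynomial.iterate_derivative_at_0_eq_zero_of_lt R N h)
    (fun i _ => by
      simpa using
        bernsteinPolynomial.iterate_derivative_at_0_ne_zero R N _ (Nat.lt_succ_iff.1 i.isLt))
    c (fun p hp => by rw [iterateDerivativeEval_apply]; exact h p hp) i (Finset.mem_univ i)

theorem bernsteinPolynomial.coeff_eq_zero_of_iterate_derivative_at_1 {N b : ℕ}
    (c : Fin (N + 1) → R)
    (h : ∀ p < b, (derivative^[p] (∑ i, c i • bernsteinPolynomial R N i)).eval 1 = 0) :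
    ∀ i : Fin (N + 1), N - i < b → c i = 0 := fun i =>
  eq_zero_of_triangular (iterateDerivativeEval 1) _ (fun i : Fin (N + 1) => N - i)
    (fun i _ j _ hij => Fin.ext (by have := i.isLt; have := j.isLt; simp only at hij; omega))
    (fun _ _ _ h => by simpa using bernsteinPolynomial.iterate_derivative_at_1_eq_zero_of_lt R N h)
    (fun i _ => by
      simpa using
        bernsteinPolynomial.iterate_derivative_at_1_ne_zero R N _ (Nat.lt_succ_iff.1 i.isLt))
    c (fun p hp => by rw [iterateDerivativeEval_apply]; exact h p hp) i (Finset.mem_univ i)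

end IterateDerivativeEval

section Field

variable {K : Type*} [Field K] [CharZero K]

theorem bernsteinPolynomial.span_eq_degreeLE (N : ℕ) :
    Submodule.span K (Set.range fun i : Fin (N + 1) => bernsteinPolynomial K N i) =
      degreeLE K N := by
  have hli := bernsteinPolynomial.linearIndependent_comp (R := K) N (fun i : Fin (N + 1) => i)
    Fin.val_injective fun i => Nat.lt_succ_iff.1 i.isLt
  have : FiniteDimensional K (degreeLT K (N + 1)) :=
    (degreeLTEquiv K (N + 1)).symm.finiteDimensional
  rw [← degreeLT_succ_eq_degreeLE]
  refine Submodule.eq_of_le_of_finrank_eq ?_ ?_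
  · rw [Submodule.span_le, degreeLT_succ_eq_degreeLE]
    rintro _ ⟨i, rfl⟩
    exact mem_degreeLE.2 (bernsteinPolynomial.degree_le N i)
  · rw [finrank_span_eq_card hli, (degreeLTEquiv K (N + 1)).finrank_eq, Fintype.card_fin,
      Module.finrank_fin_fun]

theorem bernsteinPolynomial.boundaryVanishing_eq_span (N a b : ℕ) :
    boundaryVanishing K N a b =
      Submodule.span K (bernsteinPolynomial K N '' {i | a ≤ i ∧ i + b ≤ N}) := by
  refine le_antisymm (fun q hq => ?_) (Submodule.span_le.2 ?_)
  · obtain ⟨hdeg, h0, h1⟩ := mem_boundaryVanishing.1 hq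
    rw [← mem_degreeLE, ← span_eq_degreeLE, Submodule.mem_span_range_iff_exists_fun] at hdeg
    obtain ⟨c, rfl⟩ := hdeg
    refine Submodule.sum_mem _ fun i _ => ?_
    by_cases hi : a ≤ i ∧ i + b ≤ N
    · exact Submodule.smul_mem _ _ (Submodule.subset_span ⟨i, hi, rfl⟩)
    · have hci : c i = 0 := by
        rcases Nat.lt_or_ge i a with hia | hia
        · exact coeff_eq_zero_of_iterate_derivative_at_0 c h0 i hia
        · exact coeff_eq_zero_of_iterate_derivative_at_1 c h1 i (by omega)
      rw [hci, zero_smul]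
      exact Submodule.zero_mem _
  · rintro _ ⟨i, ⟨hai, hib⟩, rfl⟩
    exact mem_boundaryVanishing.2 ⟨degree_le N i,
      fun p hp => iterate_derivative_at_0_eq_zero_of_lt K N (by omega),
      fun p hp => iterate_derivative_at_1_eq_zero_of_lt K N (by omega)⟩

end Field

theorem bernsteinP_eq_bernsteinPolynomial (N i : ℕ) :
    bernsteinP N i = bernsteinPolynomial ℝ N i := by
  simp [bernsteinP, bernsteinPolynomial, Polynomial.smul_eq_C_mul, mul_assoc]

theorem trialBC_iff (n : ℕ) (q : Polynomial ℝ) :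
    trialBC n q ↔ (∀ p < n / 2, (derivative^[p] q).eval 0 = 0) ∧
      ∀ p < (n + 1) / 2, (derivative^[p] q).eval 1 = 0 := by
  unfold trialBC
  split_ifs with h
  · obtain ⟨m, rfl⟩ := h
    constructor
    · intro H
      exact ⟨fun p hp => (H p (by omega)).1, fun p hp => (H p (by omega)).2⟩
    · rintro ⟨H0, H1⟩ p hp
      exact ⟨H0 p (by omega), H1 p (by omega)⟩
  · obtain ⟨m, rfl⟩ := Nat.not_even_iff_odd.1 h
    constructor
    · rintro ⟨H, He⟩
      refine ⟨fun p hp => (H p (by omega)).1, fun p hp => ?_⟩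
      rcases Nat.lt_or_ge p m with hpm | hpm
      · exact (H p (by omega)).2
      · rwa [show p = (2 * m + 1 - 1) / 2 by omega]
    · rintro ⟨H0, H1⟩
      exact ⟨fun p hp => ⟨H0 p (by omega), H1 p (by omega)⟩, H1 _ (by omega)⟩

theorem bernstein_basis_of_trial_space (N n : ℕ) (hn : n ≤ N) :
    LinearIndependent ℝ (fun k : Fin (N - n + 1) => bernsteinP N (n / 2 + (k : ℕ))) ∧
    ∀ q : Polynomial ℝ,
      (q.degree ≤ (N : WithBot ℕ) ∧ trialBC n q) ↔
        q ∈ Submodule.span ℝ (Set.range fun k : Fin (N - n + 1) => bernsteinP N (n / 2 + (k : ℕ))) := by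
  simp only [bernsteinP_eq_bernsteinPolynomial]
  have hindex : Set.range (fun k : Fin (N - n + 1) => n / 2 + (k : ℕ)) =
      {i | n / 2 ≤ i ∧ i + (n + 1) / 2 ≤ N} := by
    ext i
    constructor
    · rintro ⟨k, rfl⟩
      have := k.isLt
      exact ⟨Nat.le_add_right _ _, by dsimp only; omega⟩
    · rintro ⟨hi, hiN⟩
      exact ⟨⟨i - n / 2, by omega⟩, by simp only; omega⟩
  refine ⟨bernsteinPolynomial.linearIndependent_comp N _
    (fun k l hkl => Fin.ext (by simpa using hkl)) fun k => by have := k.isLt; omega, fun q => ?_⟩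
  rw [Set.range_comp', hindex, ← bernsteinPolynomial.boundaryVanishing_eq_span,
    mem_boundaryVanishing, trialBC_iff]
end
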